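/- Let (g,[·,·],φ) be a regular Hom-Lie algebra and r ∈ ∧²g with r♯∘(φ⁻¹)* = φ∘r♯. Define Δ(x) = [φ⁻²(x), r] and the dual bracket [ξ,η]_{g*} via ⟨[ξ,η]_{g*},x⟩ = ⟨Δ(x),ξ∧η⟩. Then [ξ,η]_{g*} = ad*_{φ(r♯(ξ))}((φ⁻²)*(η)) − ad*_{φ(r♯(η))}((φ⁻²)*(ξ)) for all ξ,η ∈ g*. -/

import Mathlib

/-!
Unfolding `Δ`, with `y = φ⁻²(x)` one has
`⟨[ξ,η]_{g*}, x⟩ = η(φ(r♯(ξ ∘ ad_y))) + η([y, r♯(ξ ∘ φ)])`.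
The compatibility `r♯ ∘ (φ⁻¹)* = φ ∘ r♯` moves `φ` across `r♯` in both terms, skewness of `r`
turns the first term into a pairing of `ξ` with `r♯(η)`, and multiplicativity of `φ` gives
`φ⁻²[φ(a), x] = [φ⁻¹(a), y]`, which matches both terms with the coadjoint ones.
-/

open LinearMap Module

/-- A (regular, i.e. multiplicative with invertible structure map) Hom-Lie algebra. -/
structure HomLieAlgebra (K g : Type*) [Field K] [AddCommGroup g] [Module K g] where
  bracket : g →ₗ[K] g →ₗ[K] g
  phi : g ≃ₗ[K] g
  skew : ∀ x y, bracket x y = - bracket y x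
  phi_bracket : ∀ x y, phi (bracket x y) = bracket (phi x) (phi y)
  jacobi : ∀ x y z,
    bracket (phi x) (bracket y z) + bracket (phi y) (bracket z x)
      + bracket (phi z) (bracket x y) = 0

variable {K g V : Type*} [Field K] [AddCommGroup g] [Module K g]
  [AddCommGroup V] [Module K V]

/-- `ρ` is a representation of the Hom-Lie algebra `L` on `V` with respect to `β`. -/
def HomLieAlgebra.IsRep (L : HomLieAlgebra K g) (β : V ≃ₗ[K] V)
    (ρ : g →ₗ[K] V →ₗ[K] V) : Prop :=
  (∀ x u, ρ (L.phi x) (β u) = β (ρ x u)) ∧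
  (∀ x y u, ρ (L.bracket x y) (β u) = ρ (L.phi x) (ρ y u) - ρ (L.phi y) (ρ x u))

variable [FiniteDimensional K g]

/-- The adjoint action of `x ∈ g` on `∧²g`, encoded on skew bilinear forms on `g*`. -/
def adExt (L : HomLieAlgebra K g) (x : g) (W : Dual K g → Dual K g → K)
    (ξ η : Dual K g) : K :=
  W (ξ ∘ₗ L.bracket x) (η ∘ₗ L.phi.toLinearMap)
    + W (ξ ∘ₗ L.phi.toLinearMap) (η ∘ₗ L.bracket x)

/-- The bracket on `g*` obtained from the cobracket `Δ(x) = [φ⁻²(x), r]`: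
`⟨[ξ,η]_{g*}, x⟩ = ⟨[φ⁻²(x), r], ξ∧η⟩`, where `r ∈ ∧²g` is encoded by the skew map
`r♯ : g* → g` via the bilinear form `(ξ,η) ↦ ⟨r,ξ∧η⟩ = η(r♯(ξ))`. -/
def deltaBracket (L : HomLieAlgebra K g) (rs : Dual K g →ₗ[K] g)
    (ξ η : Dual K g) (x : g) : K :=
  adExt L (L.phi.symm (L.phi.symm x)) (fun α β => β (rs α)) ξ η

section

variable {𝔤 : Type*} [AddCommGroup 𝔤] [Module K 𝔤]

theorem HomLieAlgebra.phi_symm_bracket (L : HomLieAlgebra K 𝔤) (u v : 𝔤) :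
    L.phi.symm (L.bracket u v) = L.bracket (L.phi.symm u) (L.phi.symm v) :=
  L.phi.injective <| by simp only [L.phi_bracket, LinearEquiv.apply_symm_apply]

theorem HomLieAlgebra.phi_symm_phi_symm_bracket_phi (L : HomLieAlgebra K 𝔤) (a x : 𝔤) :
    L.phi.symm (L.phi.symm (L.bracket (L.phi a) x))
      = L.bracket (L.phi.symm a) (L.phi.symm (L.phi.symm x)) := by
  rw [L.phi_symm_bracket, L.phi_symm_bracket, LinearEquiv.symm_apply_apply]

theorem apply_comp_eq_symm_apply_of_apply_comp_symm (φ : 𝔤 ≃ₗ[K] 𝔤) (rs : Dual K 𝔤 →ₗ[K] 𝔤)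
    (hcomm : ∀ ξ : Dual K 𝔤, rs (ξ ∘ₗ φ.symm.toLinearMap) = φ (rs ξ)) (ζ : Dual K 𝔤) :
    rs (ζ ∘ₗ φ.toLinearMap) = φ.symm (rs ζ) := by
  rw [φ.eq_symm_apply, ← hcomm]
  congr 1
  ext z
  simp

theorem deltaBracket_apply (L : HomLieAlgebra K 𝔤) (rs : Dual K 𝔤 →ₗ[K] 𝔤)
    (ξ η : Dual K 𝔤) (x : 𝔤) :
    deltaBracket L rs ξ η x
      = η (L.phi (rs (ξ ∘ₗ L.bracket (L.phi.symm (L.phi.symm x)))))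
        + η (L.bracket (L.phi.symm (L.phi.symm x)) (rs (ξ ∘ₗ L.phi.toLinearMap))) :=
  rfl

end

/-- for `r ∈ ∧²g` with `r♯ ∘ (φ⁻¹)* = φ ∘ r♯`, the bracket defined by
`⟨[ξ,η]_{g*},x⟩ = ⟨[φ⁻²(x),r], ξ∧η⟩` satisfies
`[ξ,η]_{g*} = ad*_{φ(r♯(ξ))}((φ⁻²)*(η)) − ad*_{φ(r♯(η))}((φ⁻²)*(ξ))`. -/
theorem deltaBracket_eq_coad (L : HomLieAlgebra K g) (rs : Dual K g →ₗ[K] g)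
    (hskew : ∀ ξ η : Dual K g, η (rs ξ) = - ξ (rs η))
    (hcomm : ∀ ξ : Dual K g, rs (ξ ∘ₗ L.phi.symm.toLinearMap) = L.phi (rs ξ)) :
    ∀ (ξ η : Dual K g) (x : g),
      deltaBracket L rs ξ η x
        = - η (L.phi.symm (L.phi.symm (L.bracket (L.phi (rs ξ)) x)))
          + ξ (L.phi.symm (L.phi.symm (L.bracket (L.phi (rs η)) x))) := by
  intro ξ η x
  have hη : η (L.phi (rs (ξ ∘ₗ L.bracket (L.phi.symm (L.phi.symm x)))))
      = ξ (L.phi.symm (L.phi.symm (L.bracket (L.phi (rs η)) x))) := by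
    rw [← hcomm, hskew, L.phi_symm_phi_symm_bracket_phi, L.skew, map_neg]
    rfl
  have hξ : η (L.bracket (L.phi.symm (L.phi.symm x)) (rs (ξ ∘ₗ L.phi.toLinearMap)))
      = - η (L.phi.symm (L.phi.symm (L.bracket (L.phi (rs ξ)) x))) := by
    rw [apply_comp_eq_symm_apply_of_apply_comp_symm L.phi rs hcomm,
      L.phi_symm_phi_symm_bracket_phi, L.skew, map_neg]
  rw [deltaBracket_apply, hη, hξ, add_comm]
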